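/- arXiv:2110.03087 — 8 statements merged into one kernel-verified Lean document; each statement's English description precedes it below -/
import Mathlib

section
/- For every odd prime p, the map f_p : ℤ → Q^∞ defined by: f_p(0) is the zero sequence; for m > 0, the j-th entry of f_p(m) is 1 exactly when j = p^k for some integer 1 ≤ k ≤ m; and for m < 0, the j-th entry of f_p(m) is 1 exactly when j = 2p^k for some integer 1 ≤ k ≤ |m|; is an isometric embedding, i.e. for all m₁, m₂ ∈ ℤ one has d_{Q^∞}(f_p(m₁), f_p(m₂)) = |m₁ − m₂|. -/
/-- `Qinf` is the space of finitely supported sequences of `0`s and `1`s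
(indexed by the natural numbers), i.e. sequences that are eventually `0`. -/
abbrev Qinf : Type := ℕ →₀ ZMod 2

/-- The ℓ¹ distance on `Qinf`: the number of indices where the two sequences differ. -/
noncomputable def Qdist (a b : Qinf) : ℕ := (a - b).support.card

lemma qinf_support_sub (a b : Qinf) : (a - b).support = symmDiff a.support b.support := by
  ext j
  simp only [Finsupp.mem_support_iff, Finset.mem_symmDiff, Finsupp.sub_apply]
  revert a b
  suffices h : ∀ x y : ZMod 2, x - y ≠ 0 ↔ (x ≠ 0 ∧ ¬ y ≠ 0) ∨ (y ≠ 0 ∧ ¬ x ≠ 0) by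
    intro a b; exact h (a j) (b j)
  decide

lemma zmod2_ne_zero_iff (x : ZMod 2) : x ≠ 0 ↔ x = 1 := by revert x; decide

/-- For every odd prime `p`, the map `f_p : ℤ → Q^∞` defined by: `f_p 0 = 0`;
for `m > 0` the `j`-th entry of `f_p m` is `1` exactly when `j = p ^ k` for some
`1 ≤ k ≤ m`; for `m < 0` the `j`-th entry of `f_p m` is `1` exactly when
`j = 2 * p ^ k` for some `1 ≤ k ≤ |m|`; is an isometric embedding. -/
theorem stmt0 (p : ℕ) (hp : p.Prime) (hodd : Odd p)
    (f : ℤ → Qinf)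
    (hzero : f 0 = 0)
    (hpos : ∀ m : ℤ, 0 < m → ∀ j : ℕ,
      f m j = 1 ↔ ∃ k : ℕ, 1 ≤ k ∧ (k : ℤ) ≤ m ∧ j = p ^ k)
    (hneg : ∀ m : ℤ, m < 0 → ∀ j : ℕ,
      f m j = 1 ↔ ∃ k : ℕ, 1 ≤ k ∧ (k : ℤ) ≤ |m| ∧ j = 2 * p ^ k) :
    ∀ m₁ m₂ : ℤ, (Qdist (f m₁) (f m₂) : ℤ) = |m₁ - m₂| := by
  have hpinj : Function.Injective (fun k : ℕ => p ^ k) :=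
    Nat.pow_right_injective hp.two_le
  have h2inj : Function.Injective (fun k : ℕ => 2 * p ^ k) := by
    intro a b h
    exact hpinj (Nat.eq_of_mul_eq_mul_left (by norm_num) h)
  -- support description for nonnegative m
  have hP : ∀ m : ℤ, 0 ≤ m →
      (f m).support = (Finset.Icc 1 m.toNat).image (fun k => p ^ k) := by
    intro m hm
    rcases eq_or_lt_of_le hm with h | h
    · simp [← h, hzero]
    · ext j
      rw [Finsupp.mem_support_iff, zmod2_ne_zero_iff, hpos m h j]
      simp only [Finset.mem_image, Finset.mem_Icc]
      constructor
      · rintro ⟨k, hk1, hk2, rfl⟩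
        exact ⟨k, ⟨hk1, by omega⟩, rfl⟩
      · rintro ⟨k, ⟨hk1, hk2⟩, rfl⟩
        exact ⟨k, hk1, by omega, rfl⟩
  -- support description for nonpositive m
  have hN : ∀ m : ℤ, m ≤ 0 →
      (f m).support = (Finset.Icc 1 m.natAbs).image (fun k => 2 * p ^ k) := by
    intro m hm
    rcases eq_or_lt_of_le hm with h | h
    · simp [h, hzero]
    · ext j
      rw [Finsupp.mem_support_iff, zmod2_ne_zero_iff, hneg m h j]
      simp only [Finset.mem_image, Finset.mem_Icc]
      constructor
      · rintro ⟨k, hk1, hk2, rfl⟩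
        rw [abs_of_neg h] at hk2
        exact ⟨k, ⟨hk1, by omega⟩, rfl⟩
      · rintro ⟨k, ⟨hk1, hk2⟩, rfl⟩
        exact ⟨k, hk1, by rw [abs_of_neg h]; omega, rfl⟩
  have hcardP : ∀ m : ℤ, 0 ≤ m → (f m).support.card = m.toNat := by
    intro m hm
    rw [hP m hm, Finset.card_image_of_injective _ hpinj, Nat.card_Icc]; omega
  have hcardN : ∀ m : ℤ, m ≤ 0 → (f m).support.card = m.natAbs := by
    intro m hm
    rw [hN m hm, Finset.card_image_of_injective _ h2inj, Nat.card_Icc]; omega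
  -- main
  suffices H : ∀ m₁ m₂ : ℤ, m₂ ≤ m₁ → (Qdist (f m₁) (f m₂) : ℤ) = |m₁ - m₂| by
    intro m₁ m₂
    rcases le_total m₂ m₁ with h | h
    · exact H m₁ m₂ h
    · have hsymm : Qdist (f m₁) (f m₂) = Qdist (f m₂) (f m₁) := by
        unfold Qdist
        rw [← Finsupp.support_neg, neg_sub]
      rw [hsymm, H m₂ m₁ h, abs_sub_comm]
  intro m₁ m₂ hle
  unfold Qdist
  rw [qinf_support_sub, abs_of_nonneg (by omega : (0:ℤ) ≤ m₁ - m₂)]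
  rcases le_or_gt 0 m₂ with h2 | h2
  · -- both nonnegative, nested supports
    have h1 : (0:ℤ) ≤ m₁ := le_trans h2 hle
    have hsub : (f m₂).support ⊆ (f m₁).support := by
      rw [hP m₁ h1, hP m₂ h2]
      exact Finset.image_subset_image (Finset.Icc_subset_Icc le_rfl (by omega))
    rw [symmDiff_of_ge hsub, Finset.card_sdiff_of_subset hsub, hcardP m₁ h1, hcardP m₂ h2]
    omega
  · rcases le_or_gt m₁ 0 with h1 | h1
    · -- both nonpositive, nested supports
      have hsub : (f m₁).support ⊆ (f m₂).support := by
        rw [hN m₁ h1, hN m₂ (le_of_lt h2)]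
        exact Finset.image_subset_image (Finset.Icc_subset_Icc le_rfl (by omega))
      rw [symmDiff_of_le hsub, Finset.card_sdiff_of_subset hsub, hcardN m₁ h1,
        hcardN m₂ (le_of_lt h2)]
      omega
    · -- opposite signs, disjoint supports
      have hdisj : Disjoint (f m₁).support (f m₂).support := by
        rw [hP m₁ (le_of_lt h1), hN m₂ (le_of_lt h2)]
        rw [Finset.disjoint_left]
        rintro x hx1 hx2
        simp only [Finset.mem_image, Finset.mem_Icc] at hx1 hx2
        obtain ⟨k, _, rfl⟩ := hx1
        obtain ⟨l, _, hl⟩ := hx2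
        have hodd' : Odd (p ^ k) := hodd.pow
        obtain ⟨c, hc⟩ := hodd'
        omega
      rw [hdisj.symmDiff_eq_sup]
      rw [Finset.sup_eq_union, Finset.card_union_of_disjoint hdisj,
        hcardP m₁ (le_of_lt h1), hcardN m₂ (le_of_lt h2)]
      omega
end

section
/- The space Q^∞ has infinite asymptotic dimension: for every n ∈ ℕ there exists R > 0 such that for every countable family (U_i)_{i∈ℕ} of open subsets of Q^∞ covering Q^∞ whose diameters are uniformly bounded (i.e. there exists D with diam(U_i) ≤ D for all i), there exists a point x ∈ Q^∞ such that the open ball of radius R centered at x has nonempty intersection with at least n + 2 of the sets U_i. -/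
/-- A subset of `Qinf` is open (for the ℓ¹ metric) if it contains a ball around
each of its points. -/
def QIsOpen (U : Set Qinf) : Prop :=
  ∀ x ∈ U, ∃ ε : ℝ, 0 < ε ∧ ∀ y : Qinf, (Qdist x y : ℝ) < ε → y ∈ U

open Finset

theorem Finset.even_card_of_involution {α : Type*} {s : Finset α} (g : α → α)
    (hg_mem : ∀ a ∈ s, g a ∈ s) (hg_ne : ∀ a ∈ s, g a ≠ a) (hg_invol : ∀ a ∈ s, g (g a) = a) :
    Even #s := by
  rw [← ZMod.natCast_eq_zero_iff_even, card_eq_sum_ones, Nat.cast_sum]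
  exact sum_involution (fun a _ => g a) (fun _ _ => by decide) (fun a ha _ => hg_ne a ha)
    hg_mem hg_invol

lemma List.eraseIdx_append_cons_length {α : Type*} (L R : List α) (x : α) :
    (L ++ x :: R).eraseIdx L.length = L ++ R := by
  simp [List.eraseIdx_append_of_length_le le_rfl]

lemma List.exists_eq_append_cons_cons {α : Type*} {l : List α} {i : ℕ} (h : i + 2 ≤ l.length) :
    ∃ pre a b post, l = pre ++ a :: b :: post ∧ pre.length = i := by
  match hdrop : l.drop i with
  | a :: b :: post =>
    exact ⟨l.take i, a, b, post, by rw [← hdrop, List.take_append_drop], by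
      rw [List.length_take]; omega⟩
  | [] | [_] =>
    have := congrArg List.length hdrop
    simp only [List.length_drop, List.length_nil, List.length_cons] at this
    omega

def List.swapAdjacent {α : Type*} : ℕ → List α → List α
  | 0, a :: b :: t => b :: a :: t
  | i + 1, a :: t => a :: swapAdjacent i t
  | _, l => l

lemma List.swapAdjacent_append {α : Type*} (pre : List α) (a b : α) (post : List α) :
    (pre ++ a :: b :: post).swapAdjacent pre.length = pre ++ b :: a :: post := by
  induction pre with
  | nil => rfl
  | cons x pre ih => simp [List.swapAdjacent, ih]

lemma List.card_filter_getElem?_eq_count {α : Type*} [DecidableEq α] (L : List α) (x : α) :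
    #{k ∈ Finset.range L.length | L[k]? = some x} = L.count x := by
  induction L with
  | nil => simp
  | cons a L ih =>
    rw [List.length_cons, Finset.card_filter, Finset.sum_range_succ']
    simp only [List.getElem?_cons_succ, List.getElem?_cons_zero, Option.some.injEq]
    rw [← Finset.card_filter, ih, List.count_cons]
    simp

lemma List.nodup_of_forall_lt_mem {L : List ℕ} {n : ℕ} (hlen : L.length = n)
    (h : ∀ c < n, c ∈ L) : L.Nodup :=
  ((List.nodup_range.subperm fun c hc => h c (List.mem_range.1 hc)).perm_of_length_le
    (by simp [hlen])).nodup_iff.1 List.nodup_range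

lemma List.exists_perm_cons_range {L : List ℕ} {m : ℕ} (hlen : L.length = m + 1)
    (h : ∀ c < m, c ∈ L) : ∃ x, L.Perm (x :: List.range m) := by
  have hle : Multiset.range m ≤ (L : Multiset ℕ) :=
    (Multiset.le_iff_subset (Multiset.nodup_range m)).2 fun c hc => h c (Multiset.mem_range.1 hc)
  obtain ⟨x, hx⟩ := Multiset.card_eq_one.1 (show Multiset.card ((L : Multiset ℕ) - .range m) = 1 by
    rw [Multiset.card_sub hle]; simp [hlen])
  refine ⟨x, Multiset.coe_eq_coe.1 ?_⟩
  rw [← tsub_add_cancel_of_le hle, hx, Multiset.singleton_add]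
  rfl

lemma List.forall_lt_mem_eraseIdx_iff {L : List ℕ} {m x : ℕ} (hx : L.Perm (x :: List.range m))
    {k : ℕ} (hk : k < L.length) : (∀ c < m, c ∈ L.eraseIdx k) ↔ L[k] = x := by
  have herase := (List.erase_getElem hk).symm.trans (hx.erase L[k])
  have hy : L[k] ∈ x :: List.range m := hx.mem_iff.1 (List.getElem_mem hk)
  generalize L[k] = y at herase hy ⊢
  simp only [herase.mem_iff]
  rcases eq_or_ne y x with rfl | hyx
  · simp
  · have hym : y < m := by simpa [hyx] using hy
    simp only [hyx, iff_false, not_forall]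
    refine ⟨y, hym, ?_⟩
    rw [List.erase_cons_tail (by simpa using hyx.symm)]
    simp [hyx, List.nodup_range.not_mem_erase]

/-- The parity count behind Sperner's lemma: read `L` as the labels of the vertices of a
simplex, and `k` as a vertex whose opposite facet still carries all labels `< m`. -/
lemma List.odd_card_forall_lt_mem_eraseIdx_iff {L : List ℕ} {m : ℕ} (hlen : L.length = m + 1)
    (hL : ∀ x ∈ L, x < m + 1) :
    Odd #{k ∈ Finset.range (m + 1) | ∀ c < m, c ∈ L.eraseIdx k} ↔ ∀ c < m + 1, c ∈ L := by
  by_cases hcov : ∀ c < m, c ∈ L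
  swap
  · rw [Finset.filter_eq_empty_iff.2 fun k _ h =>
      hcov fun c hc => List.mem_of_mem_eraseIdx (h c hc)]
    exact iff_of_false (by simp) fun h => hcov fun c hc => h c (by omega)
  -- `L` is `0, …, m - 1` plus one extra label `x`, and the good positions are those holding `x`.
  obtain ⟨x, hx⟩ := List.exists_perm_cons_range hlen hcov
  have hfilter : {k ∈ Finset.range (m + 1) | ∀ c < m, c ∈ L.eraseIdx k} =
      {k ∈ Finset.range L.length | L[k]? = some x} := by
    rw [hlen]
    refine Finset.filter_congr fun k hk => ?_
    have hk' : k < L.length := by rw [hlen]; exact Finset.mem_range.1 hk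
    rw [List.forall_lt_mem_eraseIdx_iff hx hk', List.getElem?_eq_getElem hk', Option.some_inj]
  have hxm : x < m + 1 := hL x (hx.mem_iff.2 List.mem_cons_self)
  rw [hfilter, List.card_filter_getElem?_eq_count, hx.count_eq, List.count_cons_self,
    List.count_range]
  simp only [hx.mem_iff, List.mem_cons, List.mem_range]
  rcases Nat.lt_or_ge x m with hlt | hge
  · rw [if_pos hlt]
    exact iff_of_false (by decide) fun h => by have := h m (by omega); omega
  · rw [if_neg (by omega)]
    exact iff_of_true odd_one fun c hc => by omega

namespace Sperner

noncomputable def transfer (j : ℕ) : ℕ →₀ ℤ := Finsupp.single (j + 1) 1 - Finsupp.single j 1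

lemma transfer_apply (j c : ℕ) :
    transfer j c = (if c = j + 1 then 1 else 0) - (if c = j then 1 else 0) := by
  simp [transfer, Finsupp.single_apply, eq_comm]

lemma sum_range_transfer_apply {m j : ℕ} (hj : j < m) :
    ∑ c ∈ range (m + 1), transfer j c = 0 := by
  simp [transfer_apply, sum_sub_distrib, sum_ite_eq', hj, show j < m + 1 by omega]

/-- Grid points are `ℤ`-valued so that transfers can be added and subtracted freely; membership in
the grid is what keeps coordinates nonnegative. -/
noncomputable def grid (m N : ℕ) : Finset (ℕ →₀ ℤ) :=
  ((range (m + 1)).finsuppAntidiag N).map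
    ⟨Finsupp.mapRange (↑) Nat.cast_zero, Finsupp.mapRange_injective _ _ Nat.cast_injective⟩

lemma mem_grid {m N : ℕ} {v : ℕ →₀ ℤ} :
    v ∈ grid m N ↔ (∀ i, 0 ≤ v i) ∧ (∀ i, m < i → v i = 0) ∧ ∑ i ∈ range (m + 1), v i = N := by
  constructor
  · rintro hv
    obtain ⟨f, hf, rfl⟩ := mem_map.1 hv
    rw [mem_finsuppAntidiag] at hf
    refine ⟨fun i => by simp, fun i hi => ?_, by simp [← hf.1]⟩
    have : i ∉ f.support := fun h => by have := mem_range.1 (hf.2 h); omega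
    simp_all
  · rintro ⟨hnonneg, hzero, hsum⟩
    refine mem_map.2 ⟨Finsupp.mapRange Int.toNat (by simp) v, ?_, ?_⟩
    · rw [mem_finsuppAntidiag]
      refine ⟨?_, fun i hi => mem_range.2 ?_⟩
      · show ∑ i ∈ range (m + 1), (v i).toNat = N
        have : ∑ i ∈ range (m + 1), ((v i).toNat : ℤ) = N := by
          rw [← hsum]; exact sum_congr rfl fun i _ => Int.toNat_of_nonneg (hnonneg i)
        exact_mod_cast this
      · by_contra h
        simp [hzero i (by omega)] at hi
    · ext i; simp [Int.toNat_of_nonneg (hnonneg i)]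


variable {m N : ℕ}

lemma apply_nonneg_of_mem_grid {v : ℕ →₀ ℤ} (hv : v ∈ grid m N) (i : ℕ) : 0 ≤ v i :=
  (mem_grid.1 hv).1 i

lemma lt_of_apply_pos {v : ℕ →₀ ℤ} (hv : v ∈ grid m N) {c : ℕ} (hc : 0 < v c) : c < m + 1 := by
  by_contra h
  have := (mem_grid.1 hv).2.1 c (by omega)
  omega

lemma add_transfer_mem_grid {v : ℕ →₀ ℤ} (hv : v ∈ grid m N) {j : ℕ} (hj : j < m)
    (hvj : 0 < v j) : v + transfer j ∈ grid m N := by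
  obtain ⟨hnonneg, hzero, hsum⟩ := mem_grid.1 hv
  refine mem_grid.2 ⟨fun i => ?_, fun i hi => ?_, ?_⟩
  · have := hnonneg i
    simp only [Finsupp.add_apply, transfer_apply]
    split_ifs <;> subst_vars <;> omega
  · have := hzero i hi
    simp only [Finsupp.add_apply, transfer_apply]
    split_ifs <;> subst_vars <;> omega
  · simp [sum_add_distrib, hsum, sum_range_transfer_apply hj]

lemma sub_transfer_mem_grid {v : ℕ →₀ ℤ} (hv : v ∈ grid m N) {j : ℕ} (hj : j < m)
    (hvj : 0 < v (j + 1)) : v - transfer j ∈ grid m N := by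
  obtain ⟨hnonneg, hzero, hsum⟩ := mem_grid.1 hv
  refine mem_grid.2 ⟨fun i => ?_, fun i hi => ?_, ?_⟩
  · have := hnonneg i
    simp only [Finsupp.sub_apply, transfer_apply]
    split_ifs <;> subst_vars <;> omega
  · have := hzero i hi
    simp only [Finsupp.sub_apply, transfer_apply]
    split_ifs <;> subst_vars <;> omega
  · simp [sum_sub_distrib, hsum, sum_range_transfer_apply hj]

lemma grid_subset_grid_succ : grid m N ⊆ grid (m + 1) N := by
  intro v hv
  obtain ⟨hnonneg, hzero, hsum⟩ := mem_grid.1 hv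
  exact mem_grid.2 ⟨hnonneg, fun i hi => hzero i (by omega),
    by rw [sum_range_succ, hsum, hzero _ (by omega), add_zero]⟩

lemma mem_grid_of_mem_grid_succ {v : ℕ →₀ ℤ} (hv : v ∈ grid (m + 1) N) (hvm : v (m + 1) ≤ 0) :
    v ∈ grid m N := by
  obtain ⟨hnonneg, hzero, hsum⟩ := mem_grid.1 hv
  have hlast : v (m + 1) = 0 := le_antisymm hvm (hnonneg _)
  refine mem_grid.2 ⟨hnonneg, fun i hi => ?_, by rwa [sum_range_succ, hlast, add_zero] at hsum⟩
  rcases eq_or_lt_of_le (Nat.succ_le_of_lt hi) with rfl | hi'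
  · exact hlast
  · exact hzero i hi'

lemma eq_single_of_mem_grid_zero {v : ℕ →₀ ℤ} (hv : v ∈ grid 0 N) :
    v = Finsupp.single 0 (N : ℤ) := by
  obtain ⟨-, hzero, hsum⟩ := mem_grid.1 hv
  ext i
  rcases Nat.eq_zero_or_pos i with rfl | hi
  · simpa using hsum
  · simp [hzero i hi, hi.ne]

noncomputable def vertices (v : ℕ →₀ ℤ) (l : List ℕ) : List (ℕ →₀ ℤ) :=
  l.scanl (fun w j => w + transfer j) v

noncomputable def endpoint (v : ℕ →₀ ℤ) (l : List ℕ) : ℕ →₀ ℤ :=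
  l.foldl (fun w j => w + transfer j) v

@[simp] lemma vertices_nil (v : ℕ →₀ ℤ) : vertices v [] = [v] := rfl

@[simp] lemma vertices_cons (v : ℕ →₀ ℤ) (a : ℕ) (t : List ℕ) :
    vertices v (a :: t) = v :: vertices (v + transfer a) t :=
  List.scanl_cons

@[simp] lemma endpoint_nil (v : ℕ →₀ ℤ) : endpoint v [] = v := rfl

@[simp] lemma endpoint_cons (v : ℕ →₀ ℤ) (a : ℕ) (t : List ℕ) :
    endpoint v (a :: t) = endpoint (v + transfer a) t := rfl

@[simp] lemma length_vertices (v : ℕ →₀ ℤ) (l : List ℕ) : (vertices v l).length = l.length + 1 :=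
  List.length_scanl

lemma vertices_append (v : ℕ →₀ ℤ) (l₁ l₂ : List ℕ) :
    vertices v (l₁ ++ l₂) = vertices v l₁ ++ (vertices (endpoint v l₁) l₂).tail :=
  List.scanl_append

lemma vertices_concat (v : ℕ →₀ ℤ) (l : List ℕ) (a : ℕ) :
    vertices v (l ++ [a]) = vertices v l ++ [endpoint v l + transfer a] := by
  simp [vertices_append]

lemma endpoint_concat (v : ℕ →₀ ℤ) (l : List ℕ) (a : ℕ) :
    endpoint v (l ++ [a]) = endpoint v l + transfer a := by
  simp [endpoint]

lemma self_mem_vertices (v : ℕ →₀ ℤ) (l : List ℕ) : v ∈ vertices v l := by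
  cases l <;> simp

lemma endpoint_mem_vertices (v : ℕ →₀ ℤ) (l : List ℕ) : endpoint v l ∈ vertices v l := by
  induction l generalizing v with
  | nil => simp
  | cons a t ih => simp [ih]

lemma endpoint_eq_add_sum (v : ℕ →₀ ℤ) (l : List ℕ) :
    endpoint v l = v + (l.map transfer).sum := by
  induction l generalizing v with
  | nil => simp
  | cons a t ih => simp [ih, add_assoc]

lemma sum_map_transfer_range (m : ℕ) :
    ((List.range m).map transfer).sum = Finsupp.single m 1 - Finsupp.single 0 1 := by
  induction m with
  | zero => simp
  | succ m ih =>
    rw [List.range_succ, List.map_append, List.sum_append, ih]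
    simp only [transfer, List.map_cons, List.map_nil, List.sum_cons, List.sum_nil, add_zero]
    abel

lemma endpoint_of_perm {l : List ℕ} (hl : l.Perm (List.range m)) (v : ℕ →₀ ℤ) :
    endpoint v l = v + Finsupp.single m 1 - Finsupp.single 0 1 := by
  rw [endpoint_eq_add_sum, (hl.map transfer).sum_eq, sum_map_transfer_range, add_sub_assoc]

lemma apply_le_endpoint_apply {c : ℕ} {l : List ℕ} (hc : c ∉ l) {v w : ℕ →₀ ℤ}
    (hw : w ∈ vertices v l) : w c ≤ endpoint v l c := by
  induction l generalizing v w with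
  | nil => simp_all
  | cons a t ih =>
    rw [vertices_cons, List.mem_cons] at hw
    have hca : c ≠ a := fun h => hc (h ▸ List.mem_cons_self)
    have hstep : v c ≤ (v + transfer a) c := by
      simp only [Finsupp.add_apply, transfer_apply]; split_ifs <;> subst_vars <;> omega
    rcases hw with rfl | hw
    · exact hstep.trans (ih (fun h => hc (List.mem_cons_of_mem a h)) (self_mem_vertices _ t))
    · exact ih (fun h => hc (List.mem_cons_of_mem a h)) hw

lemma apply_le_apply_of_mem_vertices {c : ℕ} {l : List ℕ} (hc : ∀ j ∈ l, j + 1 ≠ c)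
    {v w : ℕ →₀ ℤ} (hw : w ∈ vertices v l) : w c ≤ v c := by
  induction l generalizing v with
  | nil => simp_all
  | cons a t ih =>
    rw [vertices_cons, List.mem_cons] at hw
    have hstep : (v + transfer a) c ≤ v c := by
      have := hc a List.mem_cons_self
      simp only [Finsupp.add_apply, transfer_apply]; split_ifs <;> subst_vars <;> omega
    rcases hw with rfl | hw
    · exact le_rfl
    · exact (ih (fun j hj => hc j (List.mem_cons_of_mem a hj)) hw).trans hstep

lemma vertices_append_cons_cons (v : ℕ →₀ ℤ) (pre : List ℕ) (a b : ℕ) (post : List ℕ) :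
    vertices v (pre ++ a :: b :: post) =
      vertices v pre ++ (endpoint v pre + transfer a) ::
        vertices (endpoint v pre + transfer a + transfer b) post := by
  simp [vertices_append]

/-- The simplices of the Freudenthal triangulation of `grid m N`: a base point and an order in which
to perform the transfers `0, …, m - 1`, such that all points visited lie in the grid. -/
noncomputable def simplices (m N : ℕ) : Finset ((ℕ →₀ ℤ) × List ℕ) :=
  {p ∈ grid m N ×ˢ (List.range m).permutations.toFinset | ∀ w ∈ vertices p.1 p.2, w ∈ grid m N}

lemma mem_simplices {p : (ℕ →₀ ℤ) × List ℕ} :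
    p ∈ simplices m N ↔ p.2.Perm (List.range m) ∧ ∀ w ∈ vertices p.1 p.2, w ∈ grid m N := by
  simp only [simplices, mem_filter, mem_product, List.mem_toFinset, List.mem_permutations]
  exact ⟨fun h => ⟨h.1.2, h.2⟩, fun h => ⟨⟨h.2 _ (self_mem_vertices _ _), h.1⟩, h.2⟩⟩

noncomputable def facet (q : ((ℕ →₀ ℤ) × List ℕ) × ℕ) : List (ℕ →₀ ℤ) :=
  (vertices q.1.1 q.1.2).eraseIdx q.2

lemma mem_grid_of_mem_facet {q : ((ℕ →₀ ℤ) × List ℕ) × ℕ} (hq : q.1 ∈ simplices m N)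
    {w : ℕ →₀ ℤ} (hw : w ∈ facet q) : w ∈ grid m N :=
  (mem_simplices.1 hq).2 w (List.mem_of_mem_eraseIdx hw)

lemma facet_append_cons_cons (v : ℕ →₀ ℤ) (pre : List ℕ) (a b : ℕ) (post : List ℕ) :
    facet ((v, pre ++ a :: b :: post), pre.length + 1) =
      vertices v pre ++ vertices (endpoint v pre + transfer a + transfer b) post := by
  rw [facet, vertices_append_cons_cons, ← length_vertices v pre, List.eraseIdx_append_cons_length]

lemma facet_concat (v : ℕ →₀ ℤ) {t : List ℕ} (a : ℕ) {k : ℕ} (hk : t.length + 1 = k) :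
    facet ((v, t ++ [a]), k) = vertices v t := by
  rw [facet, vertices_concat, ← hk, ← length_vertices v t,
    List.eraseIdx_append_of_length_le le_rfl]
  simp

/-- If the transfer `b` cannot be performed before `a`, then `a` is the transfer feeding
coordinate `b` and this coordinate vanishes on the whole facet shared by the two orders. -/
lemma endpoint_apply_pos_of_swap {v : ℕ →₀ ℤ} {pre post : List ℕ} {a b : ℕ}
    (hp : (v, pre ++ a :: b :: post) ∈ simplices m N)
    (hint : ∀ c < m, ∃ w ∈ facet ((v, pre ++ a :: b :: post), pre.length + 1), 0 < w c) :
    0 < endpoint v pre b := by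
  obtain ⟨hperm, hgrid⟩ := mem_simplices.1 hp
  dsimp only at hperm hgrid
  have hnd := hperm.nodup_iff.2 List.nodup_range
  simp only [List.nodup_append, List.nodup_cons, List.mem_cons] at hnd
  have hbpre : b ∉ pre := fun h => hnd.2.2 b h b (by simp) rfl
  have hapost : a ∉ post := fun h => hnd.2.1.1 (Or.inr h)
  have hb : b < m := List.mem_range.1 (hperm.mem_iff.1 (by simp))
  rw [vertices_append_cons_cons] at hgrid
  by_contra! hub
  have hnonneg := apply_nonneg_of_mem_grid (hgrid (endpoint v pre + transfer a + transfer b)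
    (List.mem_append_right _ (List.mem_cons_of_mem _ (self_mem_vertices _ _)))) b
  have hab : b = a + 1 := by
    simp only [Finsupp.add_apply, transfer_apply] at hnonneg
    split_ifs at hnonneg <;> omega
  subst hab
  obtain ⟨w, hw, hwb⟩ := hint (a + 1) hb
  rw [facet_append_cons_cons, List.mem_append] at hw
  rcases hw with hw | hw
  · have := apply_le_endpoint_apply hbpre hw
    omega
  · have := apply_le_apply_of_mem_vertices (c := a + 1)
      (fun j hj h => hapost (by rwa [show j = a by omega] at hj)) hw
    simp only [Finsupp.add_apply, transfer_apply] at this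
    split_ifs at this <;> omega

lemma swap_mem_simplices {v : ℕ →₀ ℤ} {pre post : List ℕ} {a b : ℕ}
    (hp : (v, pre ++ a :: b :: post) ∈ simplices m N)
    (hint : ∀ c < m, ∃ w ∈ facet ((v, pre ++ a :: b :: post), pre.length + 1), 0 < w c) :
    (v, pre ++ b :: a :: post) ∈ simplices m N := by
  obtain ⟨hperm, hgrid⟩ := mem_simplices.1 hp
  dsimp only at hperm hgrid
  have hb : b < m := List.mem_range.1 (hperm.mem_iff.1 (by simp))
  rw [vertices_append_cons_cons] at hgrid
  refine mem_simplices.2 ⟨((List.Perm.swap a b post).append_left pre).trans hperm, fun w hw => ?_⟩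
  rw [vertices_append_cons_cons, add_right_comm] at hw
  rcases List.mem_append.1 hw with hw | hw
  · exact hgrid w (List.mem_append_left _ hw)
  rcases List.mem_cons.1 hw with rfl | hw
  · exact add_transfer_mem_grid (hgrid _ (List.mem_append_left _ (endpoint_mem_vertices v pre))) hb
      (endpoint_apply_pos_of_swap hp hint)
  · exact hgrid w (List.mem_append_right _ (List.mem_cons_of_mem _ hw))

lemma rotate_mem_simplices {v : ℕ →₀ ℤ} {a : ℕ} {t : List ℕ} (hp : (v, a :: t) ∈ simplices m N)
    (hint : ∀ c < m, ∃ w ∈ vertices (v + transfer a) t, 0 < w c) :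
    (v + transfer a, t ++ [a]) ∈ simplices m N := by
  obtain ⟨hperm, hgrid⟩ := mem_simplices.1 hp
  dsimp only at hperm hgrid
  have ha : a < m := List.mem_range.1 (hperm.mem_iff.1 List.mem_cons_self)
  have hat : a ∉ t := (List.nodup_cons.1 (hperm.nodup_iff.2 List.nodup_range)).1
  have hgrid' : ∀ w ∈ vertices (v + transfer a) t, w ∈ grid m N :=
    fun w hw => hgrid w (by rw [vertices_cons]; exact List.mem_cons_of_mem _ hw)
  obtain ⟨w, hw, hwa⟩ := hint a ha
  refine mem_simplices.2 ⟨(List.perm_append_singleton a t).trans hperm, fun w' hw' => ?_⟩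
  rw [vertices_concat, List.mem_append, List.mem_singleton] at hw'
  rcases hw' with hw' | rfl
  · exact hgrid' w' hw'
  · exact add_transfer_mem_grid (hgrid' _ (endpoint_mem_vertices _ _)) ha
      (hwa.trans_le (apply_le_endpoint_apply hat hw))

lemma unrotate_mem_simplices {v : ℕ →₀ ℤ} {a : ℕ} {t : List ℕ}
    (hp : (v, t ++ [a]) ∈ simplices m N) (hint : ∀ c < m + 1, ∃ w ∈ vertices v t, 0 < w c) :
    (v - transfer a, a :: t) ∈ simplices m N := by
  obtain ⟨hperm, hgrid⟩ := mem_simplices.1 hp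
  dsimp only at hperm hgrid
  have ha : a < m := List.mem_range.1 (hperm.mem_iff.1 (by simp))
  have hat : a ∉ t := fun h =>
    (List.nodup_append.1 (hperm.nodup_iff.2 List.nodup_range)).2.2 a h a (by simp) rfl
  rw [vertices_concat] at hgrid
  obtain ⟨w, hw, hwa⟩ := hint (a + 1) (by omega)
  refine mem_simplices.2 ⟨(List.perm_append_singleton a t).symm.trans hperm, fun w' hw' => ?_⟩
  rw [vertices_cons, sub_add_cancel, List.mem_cons] at hw'
  rcases hw' with rfl | hw'
  · refine sub_transfer_mem_grid (hgrid v (List.mem_append_left _ (self_mem_vertices v t))) ha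
      (hwa.trans_le (apply_le_apply_of_mem_vertices (fun j hj h => hat ?_) hw))
    rwa [show a = j by omega]
  · exact hgrid w' (List.mem_append_left _ hw')

/-- The door on the other side of the facet opposite vertex `q.2`: removing the first vertex
rotates the order of the transfers, removing the last one rotates it back, and removing a middle
vertex swaps the two transfers next to it. -/
noncomputable def pivot (m : ℕ) (q : ((ℕ →₀ ℤ) × List ℕ) × ℕ) : ((ℕ →₀ ℤ) × List ℕ) × ℕ :=
  if q.2 = 0 then
    match q.1.2 with
    | [] => q
    | a :: t => ((q.1.1 + transfer a, t ++ [a]), m)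
  else if q.2 = m then
    match q.1.2.getLast? with
    | none => q
    | some a => ((q.1.1 - transfer a, a :: q.1.2.dropLast), 0)
  else ((q.1.1, q.1.2.swapAdjacent (q.2 - 1)), q.2)

lemma pivot_cons_zero (v : ℕ →₀ ℤ) (a : ℕ) (t : List ℕ) :
    pivot m ((v, a :: t), 0) = ((v + transfer a, t ++ [a]), m) := by
  simp [pivot]

lemma pivot_concat (hm : m ≠ 0) (v : ℕ →₀ ℤ) (t : List ℕ) (a : ℕ) :
    pivot m ((v, t ++ [a]), m) = ((v - transfer a, a :: t), 0) := by
  simp [pivot, hm]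

lemma pivot_swap {pre post : List ℕ} (hm : pre.length + 1 ≠ m) (v : ℕ →₀ ℤ) (a b : ℕ) :
    pivot m ((v, pre ++ a :: b :: post), pre.length + 1) =
      ((v, pre ++ b :: a :: post), pre.length + 1) := by
  simp [pivot, hm, List.swapAdjacent_append]

lemma pivot_spec (hm : 0 < m) {q : ((ℕ →₀ ℤ) × List ℕ) × ℕ} (hq : q.1 ∈ simplices m N)
    (hk : q.2 < m + 1) (hint : ∀ c < m + 1, ∃ w ∈ facet q, 0 < w c) :
    (pivot m q).1 ∈ simplices m N ∧ (pivot m q).2 < m + 1 ∧ facet (pivot m q) = facet q ∧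
      pivot m (pivot m q) = q ∧ pivot m q ≠ q := by
  obtain ⟨⟨v, l⟩, k⟩ := q
  dsimp only at hq hk hint ⊢
  have hlen : l.length = m := (mem_simplices.1 hq).1.length_eq.trans List.length_range
  rcases Nat.eq_zero_or_pos k with rfl | hk0
  · obtain ⟨a, t, rfl⟩ :=
      List.exists_cons_of_ne_nil (show l ≠ [] by rintro rfl; rw [List.length_nil] at hlen; omega)
    have ht : t.length + 1 = m := by simpa using hlen
    have hfacet : facet ((v, a :: t), 0) = vertices (v + transfer a) t := by simp [facet]
    rw [hfacet] at hint ⊢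
    rw [pivot_cons_zero, pivot_concat hm.ne', add_sub_cancel_right, facet_concat _ a ht]
    refine ⟨rotate_mem_simplices hq fun c hc => hint c (by omega), by omega, rfl, rfl, fun h => ?_⟩
    exact absurd (congrArg Prod.snd h) hm.ne'
  rcases eq_or_lt_of_le (Nat.lt_succ_iff.1 hk) with hkm | hkm
  · subst k
    obtain ⟨t, a, rfl⟩ := (List.eq_nil_or_concat' l).resolve_left
      (by rintro rfl; rw [List.length_nil] at hlen; omega)
    have ht : t.length + 1 = m := by simpa using hlen
    rw [facet_concat v a ht] at hint ⊢
    rw [pivot_concat hm.ne', pivot_cons_zero, sub_add_cancel]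
    refine ⟨unrotate_mem_simplices hq hint, by omega, by simp [facet], rfl, fun h => ?_⟩
    exact absurd (congrArg Prod.snd h) hm.ne
  · obtain ⟨pre, a, b, post, rfl, hpre⟩ :=
      List.exists_eq_append_cons_cons (l := l) (i := k - 1) (by omega)
    obtain rfl : k = pre.length + 1 := by omega
    have hab : a ≠ b := by
      rintro rfl
      have := (mem_simplices.1 hq).1.nodup_iff.2 List.nodup_range
      simp [List.nodup_append] at this
    rw [pivot_swap hkm.ne, pivot_swap hkm.ne, facet_append_cons_cons, facet_append_cons_cons,
      add_right_comm]
    refine ⟨swap_mem_simplices hq fun c hc => hint c (by omega), hk, rfl, rfl, ?_⟩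
    simp [hab]

def LabelsCover (lab : (ℕ →₀ ℤ) → ℕ) (n : ℕ) (F : List (ℕ →₀ ℤ)) : Prop :=
  ∀ c < n, c ∈ F.map lab

instance (lab : (ℕ →₀ ℤ) → ℕ) (n : ℕ) (F : List (ℕ →₀ ℤ)) : Decidable (LabelsCover lab n F) := by
  unfold LabelsCover; infer_instance

variable (lab : (ℕ →₀ ℤ) → ℕ)

noncomputable def doors (m N : ℕ) : Finset (((ℕ →₀ ℤ) × List ℕ) × ℕ) :=
  {q ∈ simplices m N ×ˢ range (m + 1) | LabelsCover lab m (facet q)}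

noncomputable def fullyLabelled (m N : ℕ) : Finset ((ℕ →₀ ℤ) × List ℕ) :=
  {p ∈ simplices m N | LabelsCover lab (m + 1) (vertices p.1 p.2)}

variable {lab}

lemma odd_card_doors_of_simplex_iff (hlab : ∀ v ∈ grid m N, 0 < v (lab v))
    {p : (ℕ →₀ ℤ) × List ℕ} (hp : p ∈ simplices m N) :
    Odd #{k ∈ range (m + 1) | LabelsCover lab m (facet (p, k))} ↔
      LabelsCover lab (m + 1) (vertices p.1 p.2) := by
  obtain ⟨hperm, hgrid⟩ := mem_simplices.1 hp
  simp only [LabelsCover, facet, ← List.eraseIdx_map]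
  refine List.odd_card_forall_lt_mem_eraseIdx_iff (by simp [hperm.length_eq]) fun x hx => ?_
  obtain ⟨w, hw, rfl⟩ := List.mem_map.1 hx
  exact lt_of_apply_pos (hgrid w hw) (hlab w (hgrid w hw))

lemma odd_card_doors_iff (hlab : ∀ v ∈ grid m N, 0 < v (lab v)) :
    Odd #(doors lab m N) ↔ Odd #(fullyLabelled lab m N) := by
  have hcard : #(doors lab m N) =
      ∑ p ∈ simplices m N, #{k ∈ range (m + 1) | LabelsCover lab m (facet (p, k))} := by
    simp only [doors, card_filter, sum_product]
  rw [hcard, odd_sum_iff_odd_card_odd]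
  congr! 2
  exact filter_congr fun p hp => odd_card_doors_of_simplex_iff hlab hp

/-- On grid points `w c ≤ 0` means `w c = 0`. The facet of such a door lies off the face
`{v_m = 0}` and, carrying all labels `< m`, off every other face of the big simplex, so `pivot`
pairs these doors up. -/
lemma even_card_interior_doors (hm : 0 < m) (hlab : ∀ v ∈ grid m N, 0 < v (lab v)) :
    Even #{q ∈ doors lab m N | ¬ ∀ w ∈ facet q, w m ≤ 0} := by
  have hinterior : ∀ q ∈ {q ∈ doors lab m N | ¬ ∀ w ∈ facet q, w m ≤ 0},
      q.1 ∈ simplices m N ∧ q.2 < m + 1 ∧ ∀ c < m + 1, ∃ w ∈ facet q, 0 < w c := by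
    intro q hq
    simp only [doors, mem_filter, mem_product, mem_range] at hq
    obtain ⟨⟨⟨hσ, hk⟩, hcover⟩, hint⟩ := hq
    refine ⟨hσ, hk, fun c hc => ?_⟩
    rcases Nat.lt_succ_iff_lt_or_eq.1 hc with hc | rfl
    · obtain ⟨w, hw, rfl⟩ := List.mem_map.1 (hcover c hc)
      exact ⟨w, hw, hlab w (mem_grid_of_mem_facet hσ hw)⟩
    · simpa using hint
  have hspec := fun q hq =>
    pivot_spec hm (hinterior q hq).1 (hinterior q hq).2.1 (hinterior q hq).2.2
  refine even_card_of_involution (pivot m) (fun q hq => ?_) (fun q hq => (hspec q hq).2.2.2.2)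
    (fun q hq => (hspec q hq).2.2.2.1)
  obtain ⟨hσ, hk, hfacet, -⟩ := hspec q hq
  simp only [doors, mem_filter, mem_product, mem_range, hfacet] at hq ⊢
  exact ⟨⟨⟨hσ, hk⟩, hq.1.2⟩, hq.2⟩

lemma exists_concat_of_boundary_facet {q : ((ℕ →₀ ℤ) × List ℕ) × ℕ} (hq : q.1 ∈ simplices (m + 1) N)
    (hface : ∀ w ∈ facet q, w (m + 1) ≤ 0) : q.2 = m + 1 ∧ ∃ t, q.1.2 = t ++ [m] := by
  obtain ⟨⟨v, l⟩, k⟩ := q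
  obtain ⟨hperm, hgrid⟩ := mem_simplices.1 hq
  dsimp only at hperm hgrid hface ⊢
  have hlen : l.length = m + 1 := hperm.length_eq.trans List.length_range
  obtain ⟨t, a, rfl⟩ := (List.eq_nil_or_concat' l).resolve_left
    (by rintro rfl; rw [List.length_nil] at hlen; omega)
  have ht : t.length + 1 = m + 1 := by simpa using hlen
  have hend : 0 < (endpoint v t + transfer a) (m + 1) := by
    rw [← endpoint_concat, endpoint_of_perm hperm]
    have := apply_nonneg_of_mem_grid (hgrid v (self_mem_vertices _ _)) (m + 1)
    rw [Finsupp.sub_apply, Finsupp.add_apply, Finsupp.single_eq_same,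
      Finsupp.single_eq_of_ne (by omega)]
    omega
  have hk : k = m + 1 := by
    by_contra hk
    have hmem : endpoint v t + transfer a ∈ facet ((v, t ++ [a]), k) :=
      List.mem_eraseIdx_iff_getElem.2
        ⟨m + 1, by simp [ht], Ne.symm hk, by simp [vertices_concat, ← ht]⟩
    exact absurd (hface _ hmem) (not_le.2 hend)
  subst hk
  rw [facet_concat v a ht] at hface
  have hlast := hface _ (endpoint_mem_vertices v t)
  simp only [Finsupp.add_apply, transfer_apply] at hend
  have ha : a = m := by split_ifs at hend <;> omega
  exact ⟨rfl, t, by rw [ha]⟩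

lemma mem_fullyLabelled_of_boundary_door {v : ℕ →₀ ℤ} {t : List ℕ}
    (hσ : (v, t ++ [m]) ∈ simplices (m + 1) N)
    (hcover : LabelsCover lab (m + 1) (facet ((v, t ++ [m]), m + 1)))
    (hface : ∀ w ∈ facet ((v, t ++ [m]), m + 1), w (m + 1) ≤ 0) :
    (v, t) ∈ fullyLabelled lab m N := by
  obtain ⟨hperm, hgrid⟩ := mem_simplices.1 hσ
  dsimp only at hperm hgrid
  have hperm' : t.Perm (List.range m) := by
    rwa [List.range_succ, List.perm_append_right_iff] at hperm
  rw [facet_concat v m (by rw [hperm'.length_eq, List.length_range])] at hcover hface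
  refine mem_filter.2 ⟨mem_simplices.2 ⟨hperm', fun w hw => ?_⟩, hcover⟩
  exact mem_grid_of_mem_grid_succ (hgrid w (by simp [vertices_concat, hw])) (hface w hw)

lemma boundary_door_of_mem_fullyLabelled (hlab : ∀ v ∈ grid (m + 1) N, 0 < v (lab v))
    {v : ℕ →₀ ℤ} {t : List ℕ} (hp : (v, t) ∈ fullyLabelled lab m N) :
    ((v, t ++ [m]), m + 1) ∈ {q ∈ doors lab (m + 1) N | ∀ w ∈ facet q, w (m + 1) ≤ 0} := by
  obtain ⟨hσ, hcover⟩ := mem_filter.1 hp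
  obtain ⟨hperm, hgrid⟩ := mem_simplices.1 hσ
  dsimp only at hperm hgrid hcover
  have hm : 0 < endpoint v t m := by
    obtain ⟨w, hw, hwm⟩ := List.mem_map.1 (hcover m (by omega))
    refine (hlab w (grid_subset_grid_succ (hgrid w hw))).trans_le ?_
    rw [hwm]
    exact apply_le_endpoint_apply (fun h => by simpa using hperm.mem_iff.1 h) hw
  simp only [doors, mem_filter, mem_product, mem_range,
    facet_concat v m (by rw [hperm.length_eq, List.length_range])]
  refine ⟨⟨⟨mem_simplices.2 ⟨?_, fun w hw => ?_⟩, by omega⟩, hcover⟩, fun w hw => ?_⟩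
  · rw [List.range_succ]
    exact hperm.append_right [m]
  · rw [vertices_concat, List.mem_append, List.mem_singleton] at hw
    rcases hw with hw | rfl
    · exact grid_subset_grid_succ (hgrid w hw)
    · exact add_transfer_mem_grid (grid_subset_grid_succ (hgrid _ (endpoint_mem_vertices v t)))
        (by omega) hm
  · exact ((mem_grid.1 (hgrid w hw)).2.1 (m + 1) (by omega)).le

lemma card_boundary_doors (hlab : ∀ v ∈ grid (m + 1) N, 0 < v (lab v)) :
    #{q ∈ doors lab (m + 1) N | ∀ w ∈ facet q, w (m + 1) ≤ 0} = #(fullyLabelled lab m N) := by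
  refine card_nbij' (fun q => (q.1.1, q.1.2.dropLast)) (fun p => ((p.1, p.2 ++ [m]), m + 1))
    (fun q hq => ?_) (fun p hp => boundary_door_of_mem_fullyLabelled hlab hp) (fun q hq => ?_)
    (fun p _ => by simp)
  all_goals
    obtain ⟨⟨⟨hσ, -⟩, hcover⟩, hface⟩ : (_ ∧ _) ∧ _ := by
      simpa only [doors, coe_filter, mem_filter, mem_product, Set.mem_ofPred_eq] using hq
    obtain ⟨hk, t, hl⟩ := exists_concat_of_boundary_facet hσ hface
    obtain ⟨⟨v, l⟩, k⟩ := q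
    dsimp only at hk hl hσ hcover hface ⊢
    subst hk hl
  · rw [List.dropLast_concat]
    exact mem_fullyLabelled_of_boundary_door hσ hcover hface
  · simp

lemma odd_card_fullyLabelled_zero (hlab : ∀ v ∈ grid 0 N, 0 < v (lab v)) :
    Odd #(fullyLabelled lab 0 N) := by
  have hv : Finsupp.single 0 (N : ℤ) ∈ grid 0 N :=
    mem_grid.2 ⟨fun i => by rw [Finsupp.single_apply]; split_ifs <;> omega,
      fun i hi => by simp [hi.ne], by simp⟩
  convert odd_one
  refine card_eq_one.2 ⟨(Finsupp.single 0 (N : ℤ), []), ext fun ⟨v, l⟩ => ?_⟩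
  simp only [fullyLabelled, mem_filter, mem_simplices, mem_singleton, Prod.mk.injEq,
    List.range_zero, List.perm_nil]
  constructor
  · rintro ⟨⟨rfl, hgrid⟩, -⟩
    exact ⟨eq_single_of_mem_grid_zero (hgrid v (self_mem_vertices v [])), rfl⟩
  · rintro ⟨rfl, rfl⟩
    refine ⟨⟨rfl, by simpa using hv⟩, fun c hc => ?_⟩
    have := lt_of_apply_pos hv (hlab _ hv)
    simp only [vertices_nil, List.map_cons, List.map_nil, List.mem_singleton]
    omega

variable (lab) in
theorem odd_card_fullyLabelled :
    ∀ m, (∀ v ∈ grid m N, 0 < v (lab v)) → Odd #(fullyLabelled lab m N)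
  | 0, hlab => odd_card_fullyLabelled_zero hlab
  | m + 1, hlab => by
    rw [← odd_card_doors_iff hlab,
      ← card_filter_add_card_filter_not (fun q => ∀ w ∈ facet q, w (m + 1) ≤ 0),
      card_boundary_doors hlab]
    exact (odd_card_fullyLabelled m fun v hv => hlab v (grid_subset_grid_succ hv)).add_even
      (even_card_interior_doors m.succ_pos hlab)

end Sperner

open Sperner

lemma Qdist_triangle (a b c : Qinf) : Qdist a c ≤ Qdist a b + Qdist b c := by
  unfold Qdist
  rw [← sub_add_sub_cancel a b c]
  exact (card_le_card Finsupp.support_add).trans (card_union_le _ _)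

def unaryCode (v : ℕ →₀ ℤ) : Finset ℕ :=
  v.support.biUnion fun j => (range (v j).toNat).image (Nat.pair j)

lemma mem_unaryCode {v : ℕ →₀ ℤ} {x : ℕ} :
    x ∈ unaryCode v ↔ ((Nat.unpair x).2 : ℤ) < v (Nat.unpair x).1 := by
  simp only [unaryCode, mem_biUnion, mem_image, mem_range, Finsupp.mem_support_iff]
  constructor
  · rintro ⟨j, -, t, ht, rfl⟩
    simp only [Nat.unpair_pair]
    omega
  · intro h
    exact ⟨_, by omega, _, by omega, Nat.pair_unpair x⟩

noncomputable def unary (v : ℕ →₀ ℤ) : Qinf := Finsupp.indicator (unaryCode v) fun _ _ => 1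

lemma mem_support_unary_sub {v w : ℕ →₀ ℤ} {x : ℕ} :
    x ∈ (unary v - unary w).support ↔ ¬(x ∈ unaryCode v ↔ x ∈ unaryCode w) := by
  rw [Finsupp.mem_support_iff, Finsupp.sub_apply, unary, unary, Finsupp.indicator_apply,
    Finsupp.indicator_apply]
  by_cases hv : x ∈ unaryCode v <;> by_cases hw : x ∈ unaryCode w <;> simp [hv, hw]

lemma apply_le_Qdist_unary {v w : ℕ →₀ ℤ} {c : ℕ} (hw : w c ≤ 0) :
    v c ≤ Qdist (unary v) (unary w) := by
  have hsub : (range (v c).toNat).image (Nat.pair c) ⊆ (unary v - unary w).support := by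
    intro x hx
    obtain ⟨t, ht, rfl⟩ := mem_image.1 hx
    simp only [mem_support_unary_sub, mem_unaryCode, Nat.unpair_pair]
    rw [mem_range] at ht
    omega
  have := card_le_card hsub
  rw [card_image_of_injective _ fun a b h => (Nat.pair_eq_pair.1 h).2, card_range] at this
  unfold Qdist
  omega

lemma Qdist_unary_add_transfer_le (v : ℕ →₀ ℤ) (j : ℕ) :
    Qdist (unary v) (unary (v + transfer j)) ≤ 2 := by
  have hsub : (unary v - unary (v + transfer j)).support ⊆
      {Nat.pair j ((v j).toNat - 1), Nat.pair (j + 1) (v (j + 1)).toNat} := by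
    intro x hx
    rw [mem_support_unary_sub, mem_unaryCode, mem_unaryCode] at hx
    rw [← Nat.pair_unpair x]
    generalize Nat.unpair x = p at hx
    obtain ⟨i, s⟩ := p
    simp only [Finsupp.add_apply, transfer_apply] at hx
    simp only [mem_insert, mem_singleton, Nat.pair_eq_pair]
    split_ifs at hx <;> subst_vars <;> omega
  exact (card_le_card hsub).trans (card_insert_le _ _)

lemma Qdist_unary_le_of_mem_vertices {l : List ℕ} {v w : ℕ →₀ ℤ} (hw : w ∈ vertices v l) :
    Qdist (unary v) (unary w) ≤ 2 * l.length := by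
  induction l generalizing v with
  | nil => simp_all [Qdist]
  | cons a t ih =>
    rcases List.mem_cons.1 ((vertices_cons v a t) ▸ hw) with rfl | hw
    · simp [Qdist]
    · calc Qdist (unary v) (unary w)
          ≤ Qdist (unary v) (unary (v + transfer a)) + Qdist (unary (v + transfer a)) (unary w) :=
            Qdist_triangle _ _ _
        _ ≤ 2 + 2 * t.length := add_le_add (Qdist_unary_add_transfer_le v a) (ih hw)
        _ = 2 * (a :: t).length := by rw [List.length_cons]; ring

lemma exists_apply_pos_of_Qdist_le {m N D : ℕ} {S : Set Qinf}
    (hS : ∀ x ∈ S, ∀ y ∈ S, Qdist x y ≤ D) (hN : (m + 1) * D < N) :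
    ∃ c, ∀ w ∈ grid m N, unary w ∈ S → 0 < w c := by
  by_contra! h
  obtain ⟨v, hv, hvS, -⟩ := h 0
  have hle : ∀ c ∈ range (m + 1), v c ≤ D := fun c _ => by
    obtain ⟨w, -, hwS, hwc⟩ := h c
    exact (apply_le_Qdist_unary hwc).trans (by exact_mod_cast hS _ hvS _ hwS)
  have hsum := sum_le_sum hle
  rw [(mem_grid.1 hv).2.2, sum_const, card_range, nsmul_eq_mul] at hsum
  have : ((m + 1) * D : ℤ) < N := by exact_mod_cast hN
  push_cast at hsum
  linarith

/-- `Q^∞` has infinite asymptotic dimension: for every `n` there exists `R > 0`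
such that every countable cover of `Q^∞` by open sets of uniformly bounded diameter
has a ball of radius `R` meeting at least `n + 2` of its members. -/
theorem stmt2 (n : ℕ) :
    ∃ R : ℝ, 0 < R ∧
      ∀ U : ℕ → Set Qinf,
        (∀ i, QIsOpen (U i)) →
        (∀ x : Qinf, ∃ i, x ∈ U i) →
        (∃ D : ℝ, ∀ i, ∀ x ∈ U i, ∀ y ∈ U i, (Qdist x y : ℝ) ≤ D) →
        ∃ x : Qinf, ∃ s : Finset ℕ, n + 2 ≤ s.card ∧
          ∀ i ∈ s, ∃ y ∈ U i, (Qdist x y : ℝ) < R := by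
  refine ⟨2 * (n + 1) + 1, by positivity, fun U _ hcover ⟨D, hD⟩ => ?_⟩
  have hD' : ∀ i, ∀ x ∈ U i, ∀ y ∈ U i, Qdist x y ≤ ⌈D⌉₊ := fun i x hx y hy => by
    exact_mod_cast (hD i x hx y hy).trans (Nat.le_ceil D)
  choose face hface using fun i => exists_apply_pos_of_Qdist_le (m := n + 1)
    (N := (n + 2) * (⌈D⌉₊ + 1)) (hD' i) (by nlinarith)
  choose c hc using hcover
  obtain ⟨⟨v, l⟩, hp⟩ := card_pos.1 (odd_card_fullyLabelled (fun w => face (c (unary w))) (n + 1)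
    fun w hw => hface _ w hw (hc _)).pos
  obtain ⟨hσ, hfull⟩ := mem_filter.1 hp
  have hlen : l.length = n + 1 := (mem_simplices.1 hσ).1.length_eq.trans List.length_range
  have hnodup : ((vertices v l).map (c ∘ unary)).Nodup := by
    refine List.Nodup.of_map face ?_
    rw [List.map_map]
    exact List.nodup_of_forall_lt_mem (by simp [hlen]) hfull
  refine ⟨unary v, ((vertices v l).map (c ∘ unary)).toFinset, ?_, fun i hi => ?_⟩
  · rw [List.toFinset_card_of_nodup hnodup]
    simp [hlen]
  · obtain ⟨w, hw, rfl⟩ := List.mem_map.1 (List.mem_toFinset.1 hi)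
    refine ⟨unary w, hc _, ?_⟩
    have hdist : (Qdist (unary v) (unary w) : ℝ) ≤ 2 * (n + 1) := by
      exact_mod_cast hlen ▸ Qdist_unary_le_of_mem_vertices hw
    linarith
end

section
/- Let G be a group, H a subgroup of G, and S, T subsets of G with T ⊆ H. Let P be a finite subset of G containing the identity such that for every g ∈ G there exists p ∈ P with p⁻¹·g ∈ H. Let M be a natural number such that whenever p, p' ∈ P and s ∈ S satisfy p⁻¹·s·p' ∈ H, the element p⁻¹·s·p' can be written as a product of at most M elements of T. Then every h ∈ H that can be written as a product of a list of n elements of S can be written as a product of a list of at most M·n elements of T. -/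
/-- Let `H ≤ G`, `S, T ⊆ G` with `T ⊆ H`, and let `P` be a finite subset of `G`
containing the identity such that every `g ∈ G` satisfies `p⁻¹ * g ∈ H` for some
`p ∈ P`.  If `M` is such that every element of `H` of the form `p⁻¹ * s * p'`
(`p, p' ∈ P`, `s ∈ S`) is a product of at most `M` elements of `T`, then every
`h ∈ H` which is a product of `n` elements of `S` is a product of at most
`M * n` elements of `T`. -/
theorem stmt3 {G : Type*} [Group G] (H : Subgroup G) (S T : Set G)
    (hT : T ⊆ (H : Set G))
    (P : Finset G) (hP1 : (1 : G) ∈ P)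
    (hP : ∀ g : G, ∃ p ∈ P, p⁻¹ * g ∈ H)
    (M : ℕ)
    (hM : ∀ p ∈ P, ∀ p' ∈ P, ∀ s ∈ S, p⁻¹ * s * p' ∈ H →
      ∃ l : List G, (∀ t ∈ l, t ∈ T) ∧ l.length ≤ M ∧ l.prod = p⁻¹ * s * p')
    (h : G) (hh : h ∈ H)
    (l : List G) (hl : ∀ s ∈ l, s ∈ S) (hprod : l.prod = h) :
    ∃ l' : List G, (∀ t ∈ l', t ∈ T) ∧ l'.length ≤ M * l.length ∧ l'.prod = h := by
  have aux : ∀ l : List G, (∀ s ∈ l, s ∈ S) → ∀ p ∈ P, p⁻¹ * l.prod ∈ H →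
      (p = 1 ∨ l ≠ []) → ∃ l' : List G, (∀ t ∈ l', t ∈ T) ∧ l'.length ≤ M * l.length ∧
        l'.prod = p⁻¹ * l.prod := by
    intro l
    induction l with
    | nil =>
      intro _ p _ _ hd
      refine ⟨[], by simp, by simp, ?_⟩
      rcases hd with rfl | hne
      · simp
      · exact absurd rfl hne
    | cons s rest ih =>
      intro hsl p hp hH _
      obtain ⟨p', hp', hrest, hd⟩ : ∃ p' ∈ P, p'⁻¹ * rest.prod ∈ H ∧ (p' = 1 ∨ rest ≠ []) := by
        rcases rest with _ | ⟨a, rest⟩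
        · exact ⟨1, hP1, by simpa using H.one_mem, Or.inl rfl⟩
        · obtain ⟨p', hp', hmem⟩ := hP ((a :: rest).prod)
          exact ⟨p', hp', hmem, Or.inr (by simp)⟩
      have hs : s ∈ S := hsl s (by simp)
      have hps : p⁻¹ * s * p' ∈ H := by
        have heq : p⁻¹ * s * p' = (p⁻¹ * (s :: rest).prod) * (p'⁻¹ * rest.prod)⁻¹ := by
          simp only [List.prod_cons]; group
        rw [heq]; exact H.mul_mem hH (H.inv_mem hrest)
      obtain ⟨l1, hl1T, hl1len, hl1prod⟩ := hM p hp p' hp' s hs hps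
      obtain ⟨l2, hl2T, hl2len, hl2prod⟩ := ih (fun x hx => hsl x (by simp [hx])) p' hp' hrest hd
      refine ⟨l1 ++ l2, ?_, ?_, ?_⟩
      · intro t ht
        rcases List.mem_append.1 ht with h1 | h2
        exacts [hl1T t h1, hl2T t h2]
      · simp only [List.length_append, List.length_cons, Nat.mul_succ]
        omega
      · rw [List.prod_append, hl1prod, hl2prod, List.prod_cons]; group
  obtain ⟨l', h1, h2, h3⟩ := aux l hl 1 hP1 (by simpa [hprod]) (Or.inl rfl)
  exact ⟨l', h1, h2, by simpa [hprod] using h3⟩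
end

section
/- Let E be a compact metric space, A ⊆ E a clopen subset, and φ : E → E a continuous map. Let X, Y, S ⊆ E be subsets such that X ⊆ A, Y ⊆ E \ A, φ(X) ⊆ A, and every accumulation point of S lies in X ∪ Y. Then the set {p ∈ S : p ∈ A and φ(p) ∉ A} is finite. -/
/-! The points of `S` that `φ` moves out of `A` form the trace of `S` on the closed set
`A ∩ φ⁻¹(Aᶜ)`, which meets neither `X` (as `φ(X) ⊆ A`) nor `Y` (as `Y ∩ A = ∅`). An infinite
such trace would have an accumulation point in the compact space `E`; it would lie in that
closed set and be an accumulation point of `S`, hence lie in `X ∪ Y`. -/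

open Filter Set

theorem AccPt.mem_of_isClosed {E : Type*} [TopologicalSpace E] {x : E} {T K : Set E}
    (hx : AccPt x (𝓟 T)) (hK : IsClosed K) (hTK : T ⊆ K) : x ∈ K :=
  hK.closure_subset_iff.2 hTK (mem_closure_iff_clusterPt.2 hx.clusterPt)

theorem Set.finite_inter_of_accPt_mem {E : Type*} [TopologicalSpace E] [CompactSpace E]
    {S K Z : Set E} (hK : IsClosed K) (hZK : Disjoint Z K)
    (hacc : ∀ x, AccPt x (𝓟 S) → x ∈ Z) : (S ∩ K).Finite := by
  by_contra hinf
  obtain ⟨x, hx⟩ := Set.Infinite.exists_accPt_principal hinf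
  have hxK : x ∈ K := hx.mem_of_isClosed hK inter_subset_right
  have hxZ : x ∈ Z := hacc x (hx.mono (principal_mono.2 inter_subset_left))
  exact hZK.notMem_of_mem_left hxZ hxK

theorem stmt6_general {E : Type*} [MetricSpace E] [CompactSpace E]
    (A : Set E) (hA : IsClopen A) (φ : E → E) (hφ : Continuous φ)
    (X Y S : Set E) (hY : Y ⊆ Aᶜ) (hφX : φ '' X ⊆ A)
    (hacc : ∀ x : E, AccPt x (Filter.principal S) → x ∈ X ∪ Y) :
    {p | p ∈ S ∧ p ∈ A ∧ φ p ∉ A}.Finite := by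
  have hK : IsClosed (A ∩ φ ⁻¹' Aᶜ) :=
    hA.isClosed.inter (hA.isOpen.isClosed_compl.preimage hφ)
  have hdisj : Disjoint (X ∪ Y) (A ∩ φ ⁻¹' Aᶜ) := by
    refine Set.disjoint_left.2 fun x hxXY ⟨hxA, hφx⟩ => ?_
    rcases hxXY with hxX | hxY
    · exact hφx (hφX (mem_image_of_mem φ hxX))
    · exact hY hxY hxA
  exact Set.finite_inter_of_accPt_mem hK hdisj hacc

/-- Let `E` be a compact metric space, `A ⊆ E` clopen, `φ : E → E` continuous,
and `X, Y, S ⊆ E` with `X ⊆ A`, `Y ⊆ E \ A`, `φ(X) ⊆ A`, such that every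
accumulation point of `S` lies in `X ∪ Y`.  Then only finitely many points of
`S` lie in `A` and are moved outside of `A` by `φ`. -/
theorem stmt6 {E : Type*} [MetricSpace E] [CompactSpace E]
    (A : Set E) (hA : IsClopen A) (φ : E → E) (hφ : Continuous φ)
    (X Y S : Set E) (hX : X ⊆ A) (hY : Y ⊆ Aᶜ) (hφX : φ '' X ⊆ A)
    (hacc : ∀ x : E, AccPt x (Filter.principal S) → x ∈ X ∪ Y) :
    {p | p ∈ S ∧ p ∈ A ∧ φ p ∉ A}.Finite :=
  stmt6_general A hA φ hφ X Y S hY hφX hacc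
end

section
/- Let K be a field, V a K-vector space, W a subspace of V, and f, g linear automorphisms of V. Then, as cardinals, codim(W : W ∩ g(f(W))) ≤ codim(W : W ∩ g(W)) + codim(W : W ∩ f(W)). -/
open Cardinal

noncomputable def scodim {K V : Type*} [Field K] [AddCommGroup V] [Module K V]
    (W U : Submodule K V) : Cardinal :=
  Module.rank K (↥W ⧸ (U.comap W.subtype))

/-!
Intersect with `g(W)` first. The subspace `W ∩ g(W)` has codimension `codim(W : W ∩ g(W))` in `W`,
and inside it `W ∩ g(W) ∩ gf(W)` has codimension at most `codim(g(W) : g(W) ∩ gf(W))`, which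
equals `codim(W : W ∩ f(W))` because `g` is an automorphism. Codimensions add along the tower
`W ∩ g(W) ∩ gf(W) ≤ W ∩ g(W) ≤ W`, and `W ∩ gf(W)` contains the bottom of this tower.
-/

universe u

section

variable {K : Type*} {V : Type u} [Field K] [AddCommGroup V] [Module K V]

theorem scodim_self_inf (W U : Submodule K V) : scodim W (W ⊓ U) = scodim W U := by
  rw [scodim, scodim, Submodule.comap_inf, Submodule.comap_subtype_self, top_inf_eq]

theorem scodim_anti_right (W : Submodule K V) {U U' : Submodule K V} (h : U ≤ U') :
    scodim W U' ≤ scodim W U :=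
  LinearMap.rank_le_of_surjective _ (Submodule.factor_surjective (Submodule.comap_mono h))

theorem scodim_mono_left {X W : Submodule K V} (hXW : X ≤ W) (U : Submodule K V) :
    scodim X U ≤ scodim W U := by
  have hU : U.comap X.subtype ≤ (U.comap W.subtype).comap (Submodule.inclusion hXW) := by
    rw [← Submodule.comap_comp, Submodule.subtype_comp_inclusion]
  refine LinearMap.rank_le_of_injective (Submodule.mapQ _ _ (Submodule.inclusion hXW) hU) ?_
  rw [← LinearMap.ker_eq_bot, Submodule.ker_mapQ]
  exact Submodule.mkQ_map_self _

theorem scodim_map_equiv {V₂ : Type u} [AddCommGroup V₂] [Module K V₂] (e : V ≃ₗ[K] V₂)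
    (W U : Submodule K V) :
    scodim (W.map (e : V →ₗ[K] V₂)) (U.map (e : V →ₗ[K] V₂)) = scodim W U := by
  refine (Submodule.Quotient.equiv _ _ (e.submoduleMap W) ?_).rank_eq.symm
  ext ⟨x, hx⟩
  simp

theorem scodim_inf_le_add (W U U' : Submodule K V) :
    scodim W (U ⊓ U') ≤ scodim W U + scodim (W ⊓ U) U' := by
  set A := (U ⊓ U').comap W.subtype
  set B := U.comap W.subtype
  have hAB : A ≤ B := Submodule.comap_mono inf_le_left
  have tower : Module.rank K (W ⧸ A) = Module.rank K (W ⧸ B) + Module.rank K (B.map A.mkQ) := by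
    rw [← (Submodule.quotientQuotientEquivQuotient A B hAB).rank_eq,
      Submodule.rank_quotient_add_rank]
  let φ : ↥(W ⊓ U) →ₗ[K] W ⧸ A := A.mkQ ∘ₗ Submodule.inclusion inf_le_left
  have hφ : U'.comap (W ⊓ U).subtype ≤ LinearMap.ker φ := by
    rintro ⟨x, hxW, hxU⟩ hxU'
    exact (Submodule.Quotient.mk_eq_zero A).2 ⟨hxU, hxU'⟩
  have hrange : B.map A.mkQ ≤ LinearMap.range φ := by
    rintro _ ⟨⟨x, hxW⟩, hxU, rfl⟩
    exact ⟨⟨x, hxW, hxU⟩, rfl⟩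
  calc scodim W (U ⊓ U') = Module.rank K (W ⧸ B) + Module.rank K (B.map A.mkQ) := tower
    _ ≤ scodim W U + Module.rank K (LinearMap.range φ) :=
      add_le_add le_rfl (Submodule.rank_mono hrange)
    _ ≤ scodim W U + scodim (W ⊓ U) U' := by
      rw [← Submodule.range_liftQ _ φ hφ]
      exact add_le_add le_rfl (rank_range_le _)

end

/-- For a subspace `W` of a `K`-vector space `V` and linear automorphisms `f, g`
of `V`, `codim(W : W ∩ g(f(W))) ≤ codim(W : W ∩ g(W)) + codim(W : W ∩ f(W))`. -/
theorem stmt8 {K V : Type*} [Field K] [AddCommGroup V] [Module K V]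
    (W : Submodule K V) (f g : V ≃ₗ[K] V) :
    scodim W (W ⊓ (Submodule.map (g : V →ₗ[K] V)
        (Submodule.map (f : V →ₗ[K] V) W)))
      ≤ scodim W (W ⊓ Submodule.map (g : V →ₗ[K] V) W)
        + scodim W (W ⊓ Submodule.map (f : V →ₗ[K] V) W) := by
  set gW := W.map (g : V →ₗ[K] V)
  set fW := W.map (f : V →ₗ[K] V)
  set gfW := fW.map (g : V →ₗ[K] V)
  calc scodim W (W ⊓ gfW) = scodim W gfW := scodim_self_inf W gfW
    _ ≤ scodim W (W ⊓ gW ⊓ gfW) := scodim_anti_right W inf_le_right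
    _ ≤ scodim W (W ⊓ gW) + scodim (W ⊓ (W ⊓ gW)) gfW := scodim_inf_le_add W _ gfW
    _ ≤ scodim W (W ⊓ gW) + scodim gW gfW :=
      add_le_add le_rfl (scodim_mono_left (inf_le_right.trans inf_le_right) gfW)
    _ = scodim W (W ⊓ gW) + scodim W (W ⊓ fW) := by rw [scodim_map_equiv, scodim_self_inf W fW]
end

section
/- Let K be a field, V a K-vector space, and W₁, W₂ subspaces of V with W₁ + W₂ = V and W₁ ∩ W₂ = 0. For a linear automorphism φ of V define ‖φ‖ to be the dimension (as a cardinal) of the quotient V / ((W₁ ∩ φ(W₁)) + (W₂ ∩ φ(W₂))). Then for all linear automorphisms φ, ψ of V, ‖ψ ∘ φ‖ ≤ ‖ψ‖ + ‖φ‖. -/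
open Cardinal

/-- The homology length function: for subspaces `W₁, W₂` of `V` and a linear
automorphism `φ` of `V`, `homNorm W₁ W₂ φ` is the codimension (as a cardinal) in
`V` of the subspace `(W₁ ∩ φ(W₁)) + (W₂ ∩ φ(W₂))`. -/
noncomputable def homNorm {K V : Type*} [Field K] [AddCommGroup V] [Module K V]
    (W₁ W₂ : Submodule K V) (φ : V ≃ₗ[K] V) : Cardinal :=
  Module.rank K
    (V ⧸ ((W₁ ⊓ Submodule.map (φ : V →ₗ[K] V) W₁)
          ⊔ (W₂ ⊓ Submodule.map (φ : V →ₗ[K] V) W₂)))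

/-- Codimension is antitone: a bigger subspace has smaller quotient rank. -/
theorem rank_quot_mono {K V : Type*} [Field K] [AddCommGroup V] [Module K V]
    {A B : Submodule K V} (h : A ≤ B) :
    Module.rank K (V ⧸ B) ≤ Module.rank K (V ⧸ A) := by
  refine LinearMap.rank_le_of_surjective (Submodule.mapQ A B LinearMap.id h) ?_
  intro x
  obtain ⟨y, rfl⟩ := Submodule.Quotient.mk_surjective B x
  exact ⟨Submodule.Quotient.mk y, rfl⟩

/-- Codimension of an intersection is at most the sum of codimensions. -/
theorem rank_quot_inf_le {K V : Type*} [Field K] [AddCommGroup V] [Module K V]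
    (A B : Submodule K V) :
    Module.rank K (V ⧸ (A ⊓ B)) ≤ Module.rank K (V ⧸ A) + Module.rank K (V ⧸ B) := by
  have hker : LinearMap.ker (LinearMap.prod A.mkQ B.mkQ) = A ⊓ B := by
    rw [LinearMap.ker_prod, Submodule.ker_mkQ, Submodule.ker_mkQ]
  have e : (V ⧸ (A ⊓ B)) ≃ₗ[K] LinearMap.range (LinearMap.prod A.mkQ B.mkQ) := by
    rw [← hker]; exact (LinearMap.prod A.mkQ B.mkQ).quotKerEquivRange
  calc Module.rank K (V ⧸ (A ⊓ B))
      = Module.rank K (LinearMap.range (LinearMap.prod A.mkQ B.mkQ)) := e.rank_eq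
    _ ≤ Module.rank K ((V ⧸ A) × (V ⧸ B)) := Submodule.rank_le _
    _ = Module.rank K (V ⧸ A) + Module.rank K (V ⧸ B) := rank_prod'

/-- If `W₁ + W₂ = V` and `W₁ ∩ W₂ = 0`, the homology length function satisfies
the triangle inequality `‖ψ ∘ φ‖ ≤ ‖ψ‖ + ‖φ‖`. -/
theorem stmt9 {K V : Type*} [Field K] [AddCommGroup V] [Module K V]
    (W₁ W₂ : Submodule K V) (hsup : W₁ ⊔ W₂ = ⊤) (hinf : W₁ ⊓ W₂ = ⊥)
    (φ ψ : V ≃ₗ[K] V) :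
    homNorm W₁ W₂ (φ.trans ψ) ≤ homNorm W₁ W₂ ψ + homNorm W₁ W₂ φ := by
  set f := (φ : V →ₗ[K] V) with hf
  set g := (ψ : V →ₗ[K] V) with hg
  have hginj : Function.Injective g := ψ.injective
  set Aφ := (W₁ ⊓ Submodule.map f W₁) ⊔ (W₂ ⊓ Submodule.map f W₂) with hAφ
  set Aψ := (W₁ ⊓ Submodule.map g W₁) ⊔ (W₂ ⊓ Submodule.map g W₂) with hAψ
  set Aψφ := (W₁ ⊓ Submodule.map ((φ.trans ψ : V ≃ₗ[K] V) : V →ₗ[K] V) W₁)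
      ⊔ (W₂ ⊓ Submodule.map ((φ.trans ψ : V ≃ₗ[K] V) : V →ₗ[K] V) W₂) with hAψφ
  have hcomp : (((φ.trans ψ : V ≃ₗ[K] V)) : V →ₗ[K] V) = g ∘ₗ f := rfl
  -- disjointness of images
  have hgdisj : Submodule.map g W₁ ⊓ Submodule.map g W₂ = ⊥ := by
    rw [← Submodule.map_inf g hginj, hinf, Submodule.map_bot]
  -- key inclusion
  have hkey : Submodule.map g Aφ ⊓ Aψ ≤ Aψφ := by
    rintro x ⟨hx1, hx2⟩
    rw [hAφ, Submodule.map_sup] at hx1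
    obtain ⟨a, ha, b, hb, rfl⟩ := Submodule.mem_sup.mp hx1
    obtain ⟨c, hc, d, hd, hcd⟩ := Submodule.mem_sup.mp hx2
    have haW1 : a ∈ Submodule.map g W₁ := Submodule.map_mono inf_le_left ha
    have hbW2 : b ∈ Submodule.map g W₂ := Submodule.map_mono inf_le_left hb
    have hacd : a - c = d - b := by
      have h' := hcd
      abel_nf
      linear_combination (norm := abel) -h'
    have hacW1 : a - c ∈ Submodule.map g W₁ := sub_mem haW1 hc.2
    have hacW2 : a - c ∈ Submodule.map g W₂ := by
      rw [hacd]; exact sub_mem hd.2 hbW2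
    have hac : a = c := by
      have hbot : a - c ∈ (⊥ : Submodule K V) := by
        rw [← hgdisj]; exact ⟨hacW1, hacW2⟩
      exact sub_eq_zero.mp (Submodule.mem_bot K |>.mp hbot)
    have hbd : b = d := by
      have : d - b = 0 := by rw [← hacd, hac, sub_self]
      exact (sub_eq_zero.mp this).symm
    have haf : a ∈ Submodule.map (g ∘ₗ f) W₁ := by
      rw [Submodule.map_comp]
      exact Submodule.map_mono inf_le_right ha
    have hbf : b ∈ Submodule.map (g ∘ₗ f) W₂ := by
      rw [Submodule.map_comp]
      exact Submodule.map_mono inf_le_right hb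
    rw [hAψφ, hcomp]
    refine Submodule.mem_sup.mpr ⟨a, ⟨hac ▸ hc.1, haf⟩, b, ⟨hbd ▸ hd.1, hbf⟩, rfl⟩
  -- rank chain
  have e : (V ⧸ Submodule.map g Aφ) ≃ₗ[K] (V ⧸ Aφ) :=
    (Submodule.Quotient.equiv Aφ (Submodule.map g Aφ) ψ rfl).symm
  calc homNorm W₁ W₂ (φ.trans ψ)
      = Module.rank K (V ⧸ Aψφ) := rfl
    _ ≤ Module.rank K (V ⧸ (Submodule.map g Aφ ⊓ Aψ)) := rank_quot_mono hkey
    _ ≤ Module.rank K (V ⧸ Submodule.map g Aφ) + Module.rank K (V ⧸ Aψ) :=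
        rank_quot_inf_le _ _
    _ = Module.rank K (V ⧸ Aψ) + Module.rank K (V ⧸ Aφ) := by rw [e.rank_eq, add_comm]
    _ = homNorm W₁ W₂ ψ + homNorm W₁ W₂ φ := rfl
end

section
/- Let K be a field, V a K-vector space, W₁, W₂ subspaces of V, and φ a linear automorphism of V. Then the dimension (as a cardinal) of V / ((W₁ ∩ φ(W₁)) + (W₂ ∩ φ(W₂))) equals the dimension of V / ((W₁ ∩ φ⁻¹(W₁)) + (W₂ ∩ φ⁻¹(W₂))). -/
open Cardinal

theorem Submodule.map_symm_inf_map {R M : Type*} [Semiring R] [AddCommMonoid M] [Module R M]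
    (e : M ≃ₗ[R] M) (W : Submodule R M) :
    (W ⊓ W.map (e : M →ₗ[R] M)).map (e.symm : M →ₗ[R] M) = W ⊓ W.map (e.symm : M →ₗ[R] M) := by
  rw [Submodule.map_inf _ e.symm.injective, ← Submodule.map_comp, inf_comm]
  simp

/-- Symmetry of the homology length function: `‖φ‖ = ‖φ⁻¹‖`, i.e. the dimension
of `V / ((W₁ ∩ φ(W₁)) + (W₂ ∩ φ(W₂)))` equals the dimension of
`V / ((W₁ ∩ φ⁻¹(W₁)) + (W₂ ∩ φ⁻¹(W₂)))`. -/
theorem stmt10 {K V : Type*} [Field K] [AddCommGroup V] [Module K V]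
    (W₁ W₂ : Submodule K V) (φ : V ≃ₗ[K] V) :
    homNorm W₁ W₂ φ = homNorm W₁ W₂ φ.symm := by
  refine (Submodule.Quotient.equiv _ _ φ.symm ?_).rank_eq
  rw [Submodule.map_sup]
  exact congrArg₂ (· ⊔ ·) (W₁.map_symm_inf_map φ) (W₂.map_symm_inf_map φ)
end

section
/- Let K = ℤ/2ℤ and let V be the K-vector space of finitely supported functions f : ℤ → K², with S : V → V the shift automorphism defined by (S f)(i) = f(i − 1). Let H₋ be the subspace of functions supported on {i ∈ ℤ : i ≤ 0} and H₊ the subspace of functions supported on {i ∈ ℤ : i ≥ 1}. Then for every natural number n, the quotient V / ((H₊ ∩ Sⁿ(H₊)) + (H₋ ∩ Sⁿ(H₋))) is finite dimensional of dimension exactly 2n. -/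
open Cardinal

/-- The `ZMod 2`-vector space of finitely supported functions `ℤ → (ZMod 2)²`. -/
abbrev Vsp : Type := ℤ →₀ (ZMod 2 × ZMod 2)

/-- The subspace of functions supported on `{i : ℤ | i ≤ 0}`. -/
noncomputable def Hminus : Submodule (ZMod 2) Vsp :=
  Finsupp.supported (ZMod 2 × ZMod 2) (ZMod 2) {i : ℤ | i ≤ 0}

/-- The subspace of functions supported on `{i : ℤ | 1 ≤ i}`. -/
noncomputable def Hplus : Submodule (ZMod 2) Vsp :=
  Finsupp.supported (ZMod 2 × ZMod 2) (ZMod 2) {i : ℤ | 1 ≤ i}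

/-!
`Sⁿ` translates supports by `n`, so `H₊ ∩ Sⁿ(H₊)` and `H₋ ∩ Sⁿ(H₋)` consist of the functions
supported on `[n + 1, ∞)` and on `(-∞, 0]`. Their sum is the space of functions supported off
`[1, n]`; it has the functions supported on `[1, n]` as a complement, and that space is
`(K²)ⁿ`, of dimension `2n`.
-/

open Finsupp

section Shift

variable {R M : Type*} [Semiring R] [AddCommMonoid M] [Module R M]
  {S : (ℤ →₀ M) →ₗ[R] ℤ →₀ M}

theorem pow_eq_lmapDomain_addRight (hS : ∀ f i, S f i = f (i - 1)) (n : ℕ) :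
    S ^ n = lmapDomain M R (Equiv.addRight (n : ℤ)) := by
  induction n with
  | zero => ext; simp
  | succ n ih =>
    refine LinearMap.ext fun f ↦ Finsupp.ext fun i ↦ ?_
    rw [pow_succ', Module.End.mul_apply, hS, ih, lmapDomain_apply, lmapDomain_apply,
      mapDomain_equiv_apply, mapDomain_equiv_apply]
    simp only [Equiv.addRight_symm, Equiv.coe_addRight]
    congr 1
    push_cast
    ring

theorem map_pow_supported (hS : ∀ f i, S f i = f (i - 1)) (n : ℕ) (t : Set ℤ) :
    (supported M R t).map (S ^ n) = supported M R ((· + (n : ℤ)) '' t) := by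
  rw [pow_eq_lmapDomain_addRight hS, lmapDomain_supported]
  rfl

end Shift

theorem Int.inter_image_add_union_inter_image_add_eq_compl_Icc (n : ℕ) :
    {i : ℤ | 1 ≤ i} ∩ (· + (n : ℤ)) '' {i | 1 ≤ i} ∪ {i | i ≤ 0} ∩ (· + (n : ℤ)) '' {i | i ≤ 0}
      = (Set.Icc 1 (n : ℤ))ᶜ := by
  ext i
  simp only [Set.image_add_right, Set.mem_union, Set.mem_inter_iff, Set.mem_preimage,
    Set.mem_ofPred_eq, Set.mem_compl_iff, Set.mem_Icc]
  omega

section QuotientSupported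

variable {R M α : Type*} [Ring R] [AddCommGroup M] [Module R M]

theorem isCompl_supported_compl (s : Set α) : IsCompl (supported M R sᶜ) (supported M R s) :=
  ⟨disjoint_supported_supported isCompl_compl.symm.disjoint,
    codisjoint_supported_supported isCompl_compl.symm.codisjoint⟩

noncomputable def quotientSupportedComplEquiv (s : Set α) [Finite s] :
    ((α →₀ M) ⧸ supported M R sᶜ) ≃ₗ[R] (s → M) :=
  (supported M R sᶜ).quotientEquivOfIsCompl _ (isCompl_supported_compl s) ≪≫ₗ
    supportedEquivFinsupp s ≪≫ₗ linearEquivFunOnFinite R M s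

theorem finite_quotient_supported_compl [Module.Finite R M] (s : Set α) [Finite s] :
    Module.Finite R ((α →₀ M) ⧸ supported M R sᶜ) :=
  .equiv (quotientSupportedComplEquiv s).symm

theorem finrank_quotient_supported_compl [StrongRankCondition R] [Module.Free R M]
    [Module.Finite R M] (s : Finset α) :
    Module.finrank R ((α →₀ M) ⧸ supported M R (↑s)ᶜ) = s.card * Module.finrank R M := by
  rw [(quotientSupportedComplEquiv _).finrank_eq, Module.finrank_pi_fintype, Finset.sum_const,
    Finset.card_univ, smul_eq_mul]
  simp only [SetLike.coe_sort_coe, Fintype.card_coe]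

end QuotientSupported

/-- Let `S` be the shift automorphism of `V = (ZMod 2 × ZMod 2)`-valued finitely
supported functions on `ℤ`, `(S f) i = f (i - 1)`.  Then for every `n`, the
quotient `V / ((H₊ ∩ Sⁿ(H₊)) + (H₋ ∩ Sⁿ(H₋)))` is finite dimensional of
dimension exactly `2 * n`. -/
theorem stmt11 (S : Vsp ≃ₗ[ZMod 2] Vsp)
    (hS : ∀ (f : Vsp) (i : ℤ), S f i = f (i - 1)) (n : ℕ) :
    FiniteDimensional (ZMod 2)
      (Vsp ⧸ ((Hplus ⊓ Submodule.map ((S : Vsp →ₗ[ZMod 2] Vsp) ^ n) Hplus)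
            ⊔ (Hminus ⊓ Submodule.map ((S : Vsp →ₗ[ZMod 2] Vsp) ^ n) Hminus))) ∧
    Module.finrank (ZMod 2)
      (Vsp ⧸ ((Hplus ⊓ Submodule.map ((S : Vsp →ₗ[ZMod 2] Vsp) ^ n) Hplus)
            ⊔ (Hminus ⊓ Submodule.map ((S : Vsp →ₗ[ZMod 2] Vsp) ^ n) Hminus)))
      = 2 * n := by
  have hW : (Hplus ⊓ Submodule.map ((S : Vsp →ₗ[ZMod 2] Vsp) ^ n) Hplus)
      ⊔ (Hminus ⊓ Submodule.map ((S : Vsp →ₗ[ZMod 2] Vsp) ^ n) Hminus)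
      = supported _ _ (↑(Finset.Icc 1 (n : ℤ)))ᶜ := by
    rw [Hplus, Hminus, map_pow_supported hS, map_pow_supported hS, ← supported_inter,
      ← supported_inter, ← supported_union, Int.inter_image_add_union_inter_image_add_eq_compl_Icc,
      Finset.coe_Icc]
  rw [hW]
  refine ⟨finite_quotient_supported_compl _, ?_⟩
  rw [finrank_quotient_supported_compl, Int.card_Icc, Module.finrank_prod, Module.finrank_self]
  omega
end
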